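/- Let p ∈ (0, 1/2), let Y be Bernoulli with P(Y = 1) = p, and let the opponent's report R be uniform on {0,1}, independent of Y. If the informed forecaster reports any fixed r ∈ (0, 1], her win probability is at most 1/2, which is strictly less than 3/4 − p/2, her win probability from reporting 0. -/

import Mathlib

open MeasureTheory

noncomputable section

/-- Single-event two-forecaster Simple Max utility with the quadratic score: the forecaster
reporting `a` against an opponent reporting `b`, on outcome `y`, wins (utility 1) if her
report is strictly closer to `y`, ties (utility 1/2) if equidistant, and loses (utility 0)
otherwise. -/
def u1 (a b y : ℝ) : ℝ :=
  if |a - y| < |b - y| then 1 else if |a - y| = |b - y| then 1 / 2 else 0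

lemma integral_four {Ω : Type*} [MeasurableSpace Ω]
    (μ : Measure Ω) [IsProbabilityMeasure μ]
    (R Y : Ω → ℝ) (hRmeas : Measurable R) (hYmeas : Measurable Y)
    (hRval : ∀ ω, R ω = 0 ∨ R ω = 1) (hYval : ∀ ω, Y ω = 0 ∨ Y ω = 1)
    (g : ℝ → ℝ → ℝ) :
    (∫ ω, g (R ω) (Y ω) ∂μ) =
      g 0 0 * (μ {ω | R ω = 0 ∧ Y ω = 0}).toReal +
      g 0 1 * (μ {ω | R ω = 0 ∧ Y ω = 1}).toReal +
      g 1 0 * (μ {ω | R ω = 1 ∧ Y ω = 0}).toReal +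
      g 1 1 * (μ {ω | R ω = 1 ∧ Y ω = 1}).toReal := by
  set S00 := {ω | R ω = 0 ∧ Y ω = 0} with hS00
  set S01 := {ω | R ω = 0 ∧ Y ω = 1} with hS01
  set S10 := {ω | R ω = 1 ∧ Y ω = 0} with hS10
  set S11 := {ω | R ω = 1 ∧ Y ω = 1} with hS11
  have m00 : MeasurableSet S00 :=
    (hRmeas (measurableSet_singleton 0)).inter (hYmeas (measurableSet_singleton 0))
  have m01 : MeasurableSet S01 :=
    (hRmeas (measurableSet_singleton 0)).inter (hYmeas (measurableSet_singleton 1))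
  have m10 : MeasurableSet S10 :=
    (hRmeas (measurableSet_singleton 1)).inter (hYmeas (measurableSet_singleton 0))
  have m11 : MeasurableSet S11 :=
    (hRmeas (measurableSet_singleton 1)).inter (hYmeas (measurableSet_singleton 1))
  have hfun : ∀ ω, g (R ω) (Y ω) =
      S00.indicator (fun _ => g 0 0) ω + S01.indicator (fun _ => g 0 1) ω +
      S10.indicator (fun _ => g 1 0) ω + S11.indicator (fun _ => g 1 1) ω := by
    intro ω
    rcases hRval ω with h1 | h1 <;> rcases hYval ω with h2 | h2 <;>
      simp [Set.indicator, hS00, hS01, hS10, hS11, h1, h2, Set.mem_setOf_eq]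
  have i00 : Integrable (S00.indicator (fun _ => g 0 0)) μ :=
    (integrable_const _).indicator m00
  have i01 : Integrable (S01.indicator (fun _ => g 0 1)) μ :=
    (integrable_const _).indicator m01
  have i10 : Integrable (S10.indicator (fun _ => g 1 0)) μ :=
    (integrable_const _).indicator m10
  have i11 : Integrable (S11.indicator (fun _ => g 1 1)) μ :=
    (integrable_const _).indicator m11
  calc (∫ ω, g (R ω) (Y ω) ∂μ)
      = ∫ ω, (S00.indicator (fun _ => g 0 0) ω + S01.indicator (fun _ => g 0 1) ω +
          S10.indicator (fun _ => g 1 0) ω + S11.indicator (fun _ => g 1 1) ω) ∂μ := by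
        exact integral_congr_ae (Filter.Eventually.of_forall hfun)
    _ = _ := by
        simp only [← Pi.add_apply]
        rw [integral_add' ((i00.add i01).add i10) i11,
          integral_add' (i00.add i01) i10, integral_add' i00 i01,
          integral_indicator_const _ m00, integral_indicator_const _ m01,
          integral_indicator_const _ m10, integral_indicator_const _ m11]
        simp [mul_comm]
        rfl

/-- **Deviations of the informed forecaster are suboptimal.** Let `Y` be Bernoulli(p) for
`0 < p < 1/2`, and let the opponent's report `R` be uniform on `{0,1}`, independent of `Y`
(the four hypotheses on `μ` specify exactly this joint distribution).  If the informed
forecaster reports any fixed `r ∈ (0, 1]`, her win probability is at most `1/2`, which is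
strictly less than `3/4 − p/2`, her win probability from reporting `0`. -/
theorem informed_deviation_suboptimal {Ω : Type*} [MeasurableSpace Ω]
    (μ : Measure Ω) [IsProbabilityMeasure μ]
    (p : ℝ) (hp0 : 0 < p) (hp : p < 1 / 2)
    (R Y : Ω → ℝ) (hRmeas : Measurable R) (hYmeas : Measurable Y)
    (hRval : ∀ ω, R ω = 0 ∨ R ω = 1) (hYval : ∀ ω, Y ω = 0 ∨ Y ω = 1)
    (h00 : μ {ω | R ω = 0 ∧ Y ω = 0} = ENNReal.ofReal ((1 / 2) * (1 - p)))
    (h01 : μ {ω | R ω = 0 ∧ Y ω = 1} = ENNReal.ofReal ((1 / 2) * p))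
    (h10 : μ {ω | R ω = 1 ∧ Y ω = 0} = ENNReal.ofReal ((1 / 2) * (1 - p)))
    (h11 : μ {ω | R ω = 1 ∧ Y ω = 1} = ENNReal.ofReal ((1 / 2) * p))
    (r : ℝ) (hr : r ∈ Set.Ioc (0 : ℝ) 1) :
    (∫ ω, u1 r (R ω) (Y ω) ∂μ) ≤ 1 / 2 ∧
    (1 / 2 : ℝ) < 3 / 4 - p / 2 ∧
    (∫ ω, u1 0 (R ω) (Y ω) ∂μ) = 3 / 4 - p / 2 := by
  obtain ⟨hr0, hr1⟩ := hr
  have hq : (0:ℝ) ≤ (1 / 2) * (1 - p) := by nlinarith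
  have hq' : (0:ℝ) ≤ (1 / 2) * p := by nlinarith
  have t1 : (ENNReal.ofReal ((1 / 2) * (1 - p))).toReal = (1 / 2) * (1 - p) :=
    ENNReal.toReal_ofReal hq
  have t2 : (ENNReal.ofReal ((1 / 2) * p)).toReal = (1 / 2) * p :=
    ENNReal.toReal_ofReal hq'
  have key : ∀ a : ℝ, (∫ ω, u1 a (R ω) (Y ω) ∂μ) =
      u1 a 0 0 * ((1 / 2) * (1 - p)) + u1 a 0 1 * ((1 / 2) * p) +
      u1 a 1 0 * ((1 / 2) * (1 - p)) + u1 a 1 1 * ((1 / 2) * p) := by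
    intro a
    rw [integral_four μ R Y hRmeas hYmeas hRval hYval (fun b y => u1 a b y),
      h00, h01, h10, h11, t1, t2]
  have habs : |r - 0| = r := by rw [sub_zero]; exact abs_of_pos hr0
  have habs1 : |r - 1| = 1 - r := by rw [abs_of_nonpos (by linarith)]; ring
  refine ⟨?_, by linarith, ?_⟩
  · rw [key r]
    have v00 : u1 r 0 0 = 0 := by
      simp only [u1, sub_zero, abs_of_pos hr0, abs_zero]
      rw [if_neg (by linarith), if_neg hr0.ne']
    have v01 : u1 r 0 1 = 1 := by
      simp only [u1, habs1, zero_sub, abs_neg, abs_one]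
      rw [if_pos (by linarith)]
    rcases lt_or_eq_of_le hr1 with h | h
    · have v10 : u1 r 1 0 = 1 := by
        simp only [u1, sub_zero, abs_of_pos hr0, abs_one]
        rw [if_pos h]
      have v11 : u1 r 1 1 = 0 := by
        simp only [u1, habs1, sub_self, abs_zero]
        rw [if_neg (by linarith), if_neg (by linarith)]
      rw [v00, v01, v10, v11]; linarith
    · subst h
      have v10 : u1 (1:ℝ) 1 0 = 1 / 2 := by norm_num [u1]
      have v11 : u1 (1:ℝ) 1 1 = 1 / 2 := by norm_num [u1]
      rw [v00, v01, v10, v11]; linarith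
  · rw [key 0]
    have v00 : u1 0 0 0 = 1 / 2 := by simp [u1]
    have v01 : u1 0 0 1 = 1 / 2 := by simp [u1]
    have v10 : u1 0 1 0 = 1 := by norm_num [u1]
    have v11 : u1 0 1 1 = 0 := by norm_num [u1]
    rw [v00, v01, v10, v11]; ring

end
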